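/- Let Ĉ_{α,λ}(t,s) denote the covariance of tempered fractional Brownian motion B_{α,λ} with α > 1/2, λ > 0, i.e. Ĉ_{α,λ}(t,s) = C_{α,λ}(t−s) − C_{α,λ}(t) − C_{α,λ}(s) + C_{α,λ}(0) where C_{α,λ} is the FOU covariance. Then for every r > 0 and all t, s ∈ ℝ, Ĉ_{α,λ}(rt, rs) = r^{2α−1} Ĉ_{α,rλ}(t,s). -/
import Mathlib


open Real

/-- Modified Bessel function of the second kind, via its integral representation. -/
noncomputable def besselK (ν x : ℝ) : ℝ :=
  ∫ t in Set.Ioi (0 : ℝ), Real.exp (-x * Real.cosh t) * Real.cosh (ν * t)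

/-- Covariance of the Weyl fractional Ornstein-Uhlenbeck process. -/
noncomputable def fouCov (α lam τ : ℝ) : ℝ :=
  if τ = 0 then Real.Gamma (2*α - 1) / (Real.Gamma α ^ 2 * (2*lam) ^ (2*α - 1))
  else (1 / (Real.sqrt π * Real.Gamma α)) * (|τ| / (2*lam)) ^ (α - 1/2) *
    besselK (α - 1/2) (lam * |τ|)

/-- Covariance of tempered fractional Brownian motion. -/
noncomputable def tfbmCov (α lam t s : ℝ) : ℝ :=
  fouCov α lam (t - s) - fouCov α lam t - fouCov α lam s + fouCov α lam 0

lemma fouCov_scale (α lam : ℝ) (hlam : 0 < lam) (r : ℝ) (hr : 0 < r) (τ : ℝ) :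
    fouCov α lam (r*τ) = r ^ (2*α - 1) * fouCov α (r*lam) τ := by
  unfold fouCov
  by_cases hτ : τ = 0
  · subst hτ
    rw [mul_zero, if_pos rfl, if_pos rfl]
    have h2 : (0:ℝ) < 2 * lam := by linarith
    rw [show 2 * (r * lam) = r * (2 * lam) by ring,
      Real.mul_rpow hr.le h2.le]
    have hR : r ^ (2*α - 1) ≠ 0 := (Real.rpow_pos_of_pos hr _).ne'
    have hX : ((2:ℝ)*lam) ^ (2*α - 1) ≠ 0 := (Real.rpow_pos_of_pos h2 _).ne'
    by_cases hG : Real.Gamma α = 0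
    · simp [hG]
    · field_simp
  · have hrτ : r * τ ≠ 0 := mul_ne_zero hr.ne' hτ
    rw [if_neg hrτ, if_neg hτ]
    have habs : |r * τ| = r * |τ| := by
      rw [abs_mul, abs_of_pos hr]
    have hτpos : 0 < |τ| := abs_pos.mpr hτ
    have key : (|r * τ| / (2 * lam)) ^ (α - 1/2)
        = r ^ (2*α - 1) * (|τ| / (2 * (r * lam))) ^ (α - 1/2) := by
      rw [habs]
      have : r * |τ| / (2 * lam) = (r^2) * (|τ| / (2 * (r * lam))) := by
        field_simp
      rw [this, Real.mul_rpow (by positivity) (by positivity),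
        ← Real.rpow_natCast r 2, ← Real.rpow_mul hr.le]
      congr 1
      push_cast
      ring
    rw [show lam * |r * τ| = r * lam * |τ| by rw [habs]; ring, key]
    ring

theorem stmt4 (α lam : ℝ) (hα : 1/2 < α) (hlam : 0 < lam) :
    ∀ r > (0:ℝ), ∀ t s : ℝ,
      tfbmCov α lam (r*t) (r*s) = r ^ (2*α - 1) * tfbmCov α (r*lam) t s := by
  intro r hr t s
  unfold tfbmCov
  rw [show r*t - r*s = r*(t-s) by ring, fouCov_scale α lam hlam r hr,
    fouCov_scale α lam hlam r hr, fouCov_scale α lam hlam r hr,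
    show (0:ℝ) = r * 0 by ring, fouCov_scale α lam hlam r hr]
  ring_nf
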